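/- arXiv:1407.3753 — 2 statements merged into one kernel-verified Lean document; each statement's English description precedes it below -/
import Mathlib

section
/- In the Gaussian observation model with gain, the (1,1) Fisher matrix coefficient for the joint estimation of position and flux satisfies the exact identity 𝓘_{1,1} := E[(∂ ln L/∂x_c)²] = Σ_{i=1}^n (F̃·g_i′(x_c))²/(F̃ g_i(x_c) + B̃) = (1/(2πσ²)) · (G F²/B) · Σ_{i=1}^n (e^{−γ(x_i^− − x_c)} − e^{−γ(x_i^+ − x_c)})² / (1 + (1/(√(2π)σ))·(F/B)·J_i(x_c)), where γ(x) = x²/(2σ²), x_i^± = x_i ± Δx/2, and J_i(x_c) = ∫_{x_i^−}^{x_i^+} e^{−γ(x−x_c)} dx. -/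
/-!
The score `∂ ln L/∂x_c = ∑ᵢ aᵢ (Iᵢ/λᵢ - 1)`, `aᵢ = F̃ gᵢ'(x_c)`, is a sum of independent centred
terms, so its second moment is `∑ᵢ aᵢ² Var(Iᵢ)/λᵢ² = ∑ᵢ aᵢ²/λᵢ`; the Poisson variance `Var(I) = λ`
comes from the factorial moments `E[I(I-1)⋯(I-k+1)] = λᵏ`. By the fundamental theorem of calculus,
`gᵢ'(x_c)` is the difference of the PSF values at the two pixel edges, and `gᵢ(x_c) = Jᵢ/(√(2π)σ)`;
substituting `F̃ = GF`, `B̃ = GB` gives the closed form.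
-/

open MeasureTheory ProbabilityTheory Real
open scoped NNReal Nat

namespace ProbabilityTheory

lemma hasSum_poissonMeasure_descFactorial (r : ℝ≥0) (k : ℕ) :
    HasSum (fun n ↦ exp (-r) * r ^ n / n ! * n.descFactorial k) ((r : ℝ) ^ k) := by
  have hlow : ∑ n ∈ Finset.range k, exp (-r) * r ^ n / n ! * (n.descFactorial k : ℝ) = 0 :=
    Finset.sum_eq_zero fun n hn ↦ by
      rw [Nat.descFactorial_of_lt (Finset.mem_range.1 hn), Nat.cast_zero, mul_zero]
  have hshift (n : ℕ) : exp (-r) * r ^ (n + k) / (n + k)! * ((n + k).descFactorial k : ℝ) =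
      r ^ k * (exp (-r) * r ^ n / n !) := by
    rw [Nat.add_descFactorial_eq_ascFactorial, ← Nat.factorial_mul_ascFactorial]
    have : ((n + 1).ascFactorial k : ℝ) ≠ 0 := by positivity
    push_cast
    field_simp
    ring
  rw [← hasSum_nat_add_iff' k, hlow, sub_zero]
  simpa only [hshift, mul_one] using (hasSum_one_poissonMeasure r).mul_left ((r : ℝ) ^ k)

lemma integrable_descFactorial_poissonMeasure (r : ℝ≥0) (k : ℕ) :
    Integrable (fun n : ℕ ↦ (n.descFactorial k : ℝ)) Po(r) :=
  integrable_poissonMeasure_iff.2 <| by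
    simpa only [Real.norm_natCast] using (hasSum_poissonMeasure_descFactorial r k).summable

lemma integral_descFactorial_poissonMeasure (r : ℝ≥0) (k : ℕ) :
    ∫ n, (n.descFactorial k : ℝ) ∂Po(r) = (r : ℝ) ^ k :=
  (hasSum_integral_poissonMeasure (integrable_descFactorial_poissonMeasure r k)).unique
    (hasSum_poissonMeasure_descFactorial r k)

lemma integral_natCast_poissonMeasure (r : ℝ≥0) : ∫ n, (n : ℝ) ∂Po(r) = r := by
  simpa using integral_descFactorial_poissonMeasure r 1

lemma natCast_sq_eq_descFactorial_add (n : ℕ) :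
    (n : ℝ) ^ 2 = n.descFactorial 2 + n.descFactorial 1 := by
  rw [Nat.cast_descFactorial_two, Nat.descFactorial_one]
  ring

lemma memLp_natCast_poissonMeasure (r : ℝ≥0) : MemLp (fun n : ℕ ↦ (n : ℝ)) 2 Po(r) := by
  rw [memLp_two_iff_integrable_sq (by fun_prop)]
  simp_rw [natCast_sq_eq_descFactorial_add]
  exact (integrable_descFactorial_poissonMeasure r 2).add
    (integrable_descFactorial_poissonMeasure r 1)

lemma variance_natCast_poissonMeasure (r : ℝ≥0) : Var[fun n : ℕ ↦ (n : ℝ); Po(r)] = r := by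
  rw [variance_eq_sub (memLp_natCast_poissonMeasure r), integral_natCast_poissonMeasure]
  simp_rw [Pi.pow_apply, natCast_sq_eq_descFactorial_add]
  rw [integral_add (integrable_descFactorial_poissonMeasure r 2)
    (integrable_descFactorial_poissonMeasure r 1), integral_descFactorial_poissonMeasure,
    integral_descFactorial_poissonMeasure]
  ring

section PoissonScore

-- `a * (m / r - 1)` is the score contribution of a count `m ~ Po(r)` whose mean has derivative `a`.

variable {r : ℝ≥0} (a : ℝ)

lemma poissonScore_eq :
    (fun m : ℕ ↦ a * ((m : ℝ) / r - 1)) = fun m : ℕ ↦ a / r * (m : ℝ) + -a := by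
  funext m
  ring

lemma memLp_poissonScore : MemLp (fun m : ℕ ↦ a * ((m : ℝ) / r - 1)) 2 Po(r) := by
  rw [poissonScore_eq]
  exact ((memLp_natCast_poissonMeasure r).const_mul _).add (memLp_const _)

variable (hr : 0 < r)
include hr

lemma integral_poissonScore : ∫ m, a * ((m : ℝ) / r - 1) ∂Po(r) = 0 := by
  have : (r : ℝ) ≠ 0 := by positivity
  have hint := (memLp_natCast_poissonMeasure r).integrable one_le_two
  rw [poissonScore_eq, integral_add (hint.const_mul _) (integrable_const _), integral_const_mul,
    integral_natCast_poissonMeasure]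
  simp [this]

lemma variance_poissonScore : Var[fun m : ℕ ↦ a * ((m : ℝ) / r - 1); Po(r)] = a ^ 2 / r := by
  have : (r : ℝ) ≠ 0 := by positivity
  rw [poissonScore_eq, variance_add_const (by fun_prop), variance_const_mul,
    variance_natCast_poissonMeasure]
  field_simp

end PoissonScore

lemma integral_sq_sum_pi_eq_sum_variance {ι : Type*} [Fintype ι] {Ω : ι → Type*}
    [∀ i, MeasurableSpace (Ω i)] {μ : ∀ i, Measure (Ω i)} [∀ i, IsProbabilityMeasure (μ i)]
    {X : ∀ i, Ω i → ℝ} (hX : ∀ i, MemLp (X i) 2 (μ i)) (hX0 : ∀ i, ∫ x, X i x ∂μ i = 0) :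
    ∫ ω, (∑ i, X i (ω i)) ^ 2 ∂Measure.pi μ = ∑ i, Var[X i; μ i] := by
  have hXω (i : ι) : MemLp (fun ω : ∀ i, Ω i ↦ X i (ω i)) 2 (Measure.pi μ) :=
    (hX i).comp_measurePreserving (measurePreserving_eval μ i)
  have hmean : ∫ ω, (∑ i, fun ω : ∀ i, Ω i ↦ X i (ω i)) ω ∂Measure.pi μ = 0 := by
    simp_rw [Finset.sum_apply]
    rw [integral_finsetSum _ fun i _ ↦ (hXω i).integrable one_le_two]
    exact Finset.sum_eq_zero fun i _ ↦
      (integral_comp_eval (hX i).aestronglyMeasurable).trans (hX0 i)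
  rw [← variance_sum_pi hX,
    variance_of_integral_eq_zero (memLp_finsetSum' _ fun i _ ↦ hXω i).aemeasurable hmean]
  simp_rw [Finset.sum_apply]

lemma integral_sq_sum_poissonScore_pi {ι : Type*} [Fintype ι] (a : ι → ℝ) {r : ι → ℝ≥0}
    (hr : ∀ i, 0 < r i) :
    ∫ k, (∑ i, a i * ((k i : ℝ) / r i - 1)) ^ 2 ∂Measure.pi (fun i ↦ Po(r i)) =
      ∑ i, a i ^ 2 / r i :=
  (integral_sq_sum_pi_eq_sum_variance (fun i ↦ memLp_poissonScore (a i))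
    fun i ↦ integral_poissonScore (a i) (hr i)).trans
      (Finset.sum_congr rfl fun i _ ↦ variance_poissonScore (a i) (hr i))

end ProbabilityTheory

lemma hasDerivAt_intervalIntegral_comp_sub {f : ℝ → ℝ} (hf : Continuous f) (a b t : ℝ) :
    HasDerivAt (fun s ↦ ∫ x in a..b, f (x - s)) (f (a - t) - f (b - t)) t := by
  have hΦ (y : ℝ) : HasDerivAt (fun u ↦ ∫ x in (0 : ℝ)..u, f x) (f y) y :=
    (hf.integral_hasStrictDerivAt 0 y).hasDerivAt
  have hrepr (s : ℝ) : ∫ x in a..b, f (x - s) =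
      (∫ x in (0 : ℝ)..b - s, f x) - ∫ x in (0 : ℝ)..a - s, f x := by
    rw [intervalIntegral.integral_comp_sub_right,
      intervalIntegral.integral_interval_sub_left (hf.intervalIntegrable _ _)
        (hf.intervalIntegrable _ _)]
  simp_rw [hrepr]
  exact (((hΦ _).comp_const_sub b t).sub ((hΦ _).comp_const_sub a t)).congr_deriv (by ring)

lemma sq_div_eq_mul_sq_div (G F B c E J : ℝ) (hG : G ≠ 0) (hB : B ≠ 0) :
    (G * F * (c * E)) ^ 2 / (G * F * (c * J) + G * B) =
      c ^ 2 * (G * F ^ 2 / B) * (E ^ 2 / (1 + c * (F / B) * J)) := by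
  rw [show 1 + c * (F / B) * J = (F * (c * J) + B) / B by field_simp; ring,
    show G * F * (c * J) + G * B = G * (F * (c * J) + B) by ring]
  field_simp

theorem stmt_5_general
    (n : ℕ) (σ Δx : ℝ) (hσ : 0 < σ) (hΔx : 0 < Δx)
    (xpix : Fin n → ℝ) (xc : ℝ)
    (G F B Ftil Btil : ℝ) (hFt : 0 < Ftil) (hBt : 0 < Btil)
    (hFdef : Ftil = G * F) (hBdef : Btil = G * B)
    (g : Fin n → ℝ → ℝ)
    (hg : ∀ i t, g i t = ∫ x in (xpix i - Δx / 2)..(xpix i + Δx / 2),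
        (1 / (Real.sqrt (2 * π) * σ)) * Real.exp (-(x - t) ^ 2 / (2 * σ ^ 2)))
    (J : Fin n → ℝ)
    (hJ : ∀ i, J i = ∫ x in (xpix i - Δx / 2)..(xpix i + Δx / 2),
        Real.exp (-(x - xc) ^ 2 / (2 * σ ^ 2)))
    (lam : Fin n → ℝ) (hlam : ∀ i, lam i = Ftil * g i xc + Btil)
    (μ : Measure (Fin n → ℕ))
    (hμ : μ = Measure.pi fun i => poissonMeasure (lam i).toNNReal) :
    (∫ k, (∑ i, Ftil * deriv (g i) xc * ((k i : ℝ) / lam i - 1)) ^ 2 ∂μ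
        = ∑ i, (Ftil * deriv (g i) xc) ^ 2 / (Ftil * g i xc + Btil)) ∧
    ∑ i, (Ftil * deriv (g i) xc) ^ 2 / (Ftil * g i xc + Btil)
      = (1 / (2 * π * σ ^ 2)) * (G * F ^ 2 / B) *
        ∑ i, (Real.exp (-((xpix i - Δx / 2) - xc) ^ 2 / (2 * σ ^ 2)) -
              Real.exp (-((xpix i + Δx / 2) - xc) ^ 2 / (2 * σ ^ 2))) ^ 2 /
            (1 + (1 / (Real.sqrt (2 * π) * σ)) * (F / B) * J i) := by
  set c := 1 / (√(2 * π) * σ) with hc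
  have hc_pos : 0 < c := by positivity
  have hc_sq : c ^ 2 = 1 / (2 * π * σ ^ 2) := by
    rw [hc, div_pow, mul_pow, sq_sqrt (by positivity), one_pow]
  have hderiv (i : Fin n) : deriv (g i) xc =
      c * (exp (-((xpix i - Δx / 2) - xc) ^ 2 / (2 * σ ^ 2)) -
        exp (-((xpix i + Δx / 2) - xc) ^ 2 / (2 * σ ^ 2))) := by
    rw [funext (hg i), mul_sub]
    exact (hasDerivAt_intervalIntegral_comp_sub
      (f := fun u ↦ c * exp (-u ^ 2 / (2 * σ ^ 2))) (by fun_prop) _ _ xc).deriv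
  have hgJ (i : Fin n) : g i xc = c * J i := by
    rw [hg, hJ, intervalIntegral.integral_const_mul]
  have hlam_pos (i : Fin n) : 0 < lam i := by
    have : 0 ≤ J i := hJ i ▸ intervalIntegral.integral_nonneg (by linarith) fun x _ ↦ (exp_pos _).le
    rw [hlam, hgJ]
    positivity
  refine ⟨?_, ?_⟩
  · have hlam_coe (i : Fin n) : ((lam i).toNNReal : ℝ) = lam i := coe_toNNReal _ (hlam_pos i).le
    have key := integral_sq_sum_poissonScore_pi (fun i ↦ Ftil * deriv (g i) xc)
      (fun i ↦ toNNReal_pos.2 (hlam_pos i))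
    simp only [hlam_coe] at key
    rw [hμ, key]
    simp_rw [hlam]
  · have hGB : G * B ≠ 0 := hBdef ▸ hBt.ne'
    rw [Finset.mul_sum]
    refine Finset.sum_congr rfl fun i _ ↦ ?_
    rw [hderiv, hgJ, hFdef, hBdef, ← hc_sq]
    exact sq_div_eq_mul_sq_div G F B c _ _ (left_ne_zero_of_mul hGB) (right_ne_zero_of_mul hGB)

/-- **Exact (1,1) Fisher coefficient for joint astrometry and photometry.**
In the Gaussian model with gain `G` (`F̃ = G F`, `B̃ = G B`, uniform background
`B̃ > 0`), `𝓘₁₁ = E[(∂ ln L/∂x_c)²] = Σ (F̃ g i′(x_c))²/(F̃ g i(x_c) + B̃)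
= (1/(2πσ²)) (G F²/B) Σ (e^{−γ(x_i⁻−x_c)} − e^{−γ(x_i⁺−x_c)})² /
(1 + (1/(√(2π)σ))(F/B) J i)`. -/
theorem stmt_5
    (n : ℕ) (σ Δx : ℝ) (hσ : 0 < σ) (hΔx : 0 < Δx)
    (xpix : Fin n → ℝ) (xc : ℝ)
    (G F B Ftil Btil : ℝ) (hG : 0 < G) (hFt : 0 < Ftil) (hBt : 0 < Btil)
    (hFdef : Ftil = G * F) (hBdef : Btil = G * B)
    (g : Fin n → ℝ → ℝ)
    (hg : ∀ i t, g i t = ∫ x in (xpix i - Δx / 2)..(xpix i + Δx / 2),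
        (1 / (Real.sqrt (2 * π) * σ)) * Real.exp (-(x - t) ^ 2 / (2 * σ ^ 2)))
    (J : Fin n → ℝ)
    (hJ : ∀ i, J i = ∫ x in (xpix i - Δx / 2)..(xpix i + Δx / 2),
        Real.exp (-(x - xc) ^ 2 / (2 * σ ^ 2)))
    (lam : Fin n → ℝ) (hlam : ∀ i, lam i = Ftil * g i xc + Btil)
    (μ : Measure (Fin n → ℕ))
    (hμ : μ = Measure.pi fun i => poissonMeasure (lam i).toNNReal) :
    (∫ k, (∑ i, Ftil * deriv (g i) xc * ((k i : ℝ) / lam i - 1)) ^ 2 ∂μ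
        = ∑ i, (Ftil * deriv (g i) xc) ^ 2 / (Ftil * g i xc + Btil)) ∧
    ∑ i, (Ftil * deriv (g i) xc) ^ 2 / (Ftil * g i xc + Btil)
      = (1 / (2 * π * σ ^ 2)) * (G * F ^ 2 / B) *
        ∑ i, (Real.exp (-((xpix i - Δx / 2) - xc) ^ 2 / (2 * σ ^ 2)) -
              Real.exp (-((xpix i + Δx / 2) - xc) ^ 2 / (2 * σ ^ 2))) ^ 2 /
            (1 + (1 / (Real.sqrt (2 * π) * σ)) * (F / B) * J i) :=
  stmt_5_general n σ Δx hσ hΔx xpix xc G F B Ftil Btil hFt hBt hFdef hBdef g hg J hJ lam hlam μ hμ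
end

section
/- Let σ > 0, x_c ∈ ℝ, and r ∈ [0,1). For Δx > 0 define pixel centers x_i = (i + r)·Δx for i ∈ ℤ and g_i(x_c) = ∫_{x_i−Δx/2}^{x_i+Δx/2} Φ(x − x_c) dx, where Φ(x) = (1/(√(2π)σ)) e^{−x²/(2σ²)}. Then lim_{Δx→0⁺} (1/Δx)·Σ_{i∈ℤ} g_i(x_c)² = 1/(2√π·σ). -/
open Real Filter Topology
open MeasureTheory Set

/-!
Write `g_i = ∫_{pixel i} f` with `f` the Gaussian, and let `A_h f` be the step function equal on
each pixel to the average of `f` over that pixel. Then `(1/h) Σ g_i² = ∫ f · A_h f`. By continuity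
`A_h f → f` pointwise as `h → 0⁺`, and `|A_h f| ≤ sup |f|`, so dominated convergence gives the
limit `∫ f²`, which for the Gaussian equals `1/(2√π σ)`.
-/

/-- Half-open, so that the pixels of a given size tile `ℝ`. -/
noncomputable def pixel (r h : ℝ) (i : ℤ) : Set ℝ :=
  Ioc (((i : ℝ) + r) * h - h / 2) (((i : ℝ) + r) * h + h / 2)

noncomputable def pixelIndex (r h x : ℝ) : ℤ := ⌈x / h - r - 1 / 2⌉

noncomputable def pixelFlux (f : ℝ → ℝ) (r h : ℝ) (i : ℤ) : ℝ :=
  ∫ x in ((i : ℝ) + r) * h - h / 2..((i : ℝ) + r) * h + h / 2, f x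

noncomputable def pixelAverage (f : ℝ → ℝ) (r h x : ℝ) : ℝ := pixelFlux f r h (pixelIndex r h x) / h

section Pixels

variable {f : ℝ → ℝ} {r h x C : ℝ}

theorem pixelIndex_eq_iff (hh : 0 < h) {i : ℤ} : pixelIndex r h x = i ↔ x ∈ pixel r h i := by
  have hx : x / h * h = x := div_mul_cancel₀ x hh.ne'
  rw [pixelIndex, Int.ceil_eq_iff, pixel, mem_Ioc]
  constructor <;> rintro ⟨h₁, h₂⟩ <;> constructor <;> nlinarith

theorem pixel_eq_preimage (hh : 0 < h) : pixel r h = fun i => pixelIndex r h ⁻¹' {i} := by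
  ext i x
  exact (pixelIndex_eq_iff hh).symm

theorem measurableSet_pixel (i : ℤ) : MeasurableSet (pixel r h i) := measurableSet_Ioc

theorem mem_pixel_pixelIndex (hh : 0 < h) : x ∈ pixel r h (pixelIndex r h x) :=
  (pixelIndex_eq_iff hh).1 rfl

theorem measurable_pixelIndex : Measurable (pixelIndex r h) :=
  Int.measurable_ceil.comp (by fun_prop)

theorem setIntegral_pixel (hh : 0 ≤ h) (i : ℤ) : ∫ x in pixel r h i, f x = pixelFlux f r h i :=
  (intervalIntegral.integral_of_le (by linarith)).symm

theorem norm_pixelFlux_le (hf : ∀ x, ‖f x‖ ≤ C) (i : ℤ) : ‖pixelFlux f r h i‖ ≤ C * |h| := by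
  have := intervalIntegral.norm_integral_le_of_norm_le_const (a := ((i : ℝ) + r) * h - h / 2)
    (b := ((i : ℝ) + r) * h + h / 2) fun x _ => hf x
  rwa [add_sub_sub_cancel, add_halves] at this

theorem norm_pixelAverage_le (hf : ∀ x, ‖f x‖ ≤ C) : ‖pixelAverage f r h x‖ ≤ C := by
  have hC : 0 ≤ C := (norm_nonneg _).trans (hf 0)
  rw [pixelAverage, norm_div, Real.norm_eq_abs h]
  exact div_le_of_le_mul₀ (abs_nonneg h) hC (norm_pixelFlux_le hf _)

theorem measurable_pixelAverage : Measurable (pixelAverage f r h) :=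
  (measurable_of_countable fun i => pixelFlux f r h i / h).comp measurable_pixelIndex

theorem integral_mul_pixelAverage (hfi : Integrable f) (hf : ∀ x, ‖f x‖ ≤ C) (hh : 0 < h) :
    ∫ x, f x * pixelAverage f r h x = (1 / h) * ∑' i : ℤ, pixelFlux f r h i ^ 2 := by
  have hint : Integrable fun x => f x * pixelAverage f r h x :=
    hfi.mul_bdd measurable_pixelAverage.aestronglyMeasurable
      (Eventually.of_forall fun _ => norm_pixelAverage_le hf)
  have hcover : (⋃ i : ℤ, pixel r h i) = univ := by
    rw [pixel_eq_preimage hh, ← preimage_iUnion, iUnion_of_singleton, preimage_univ]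
  have hdisj : Pairwise (Function.onFun Disjoint (pixel r h)) := by
    rw [pixel_eq_preimage hh]
    exact pairwise_disjoint_fiber (pixelIndex r h)
  have hpixel (i : ℤ) :
      ∫ x in pixel r h i, f x * pixelAverage f r h x = (1 / h) * pixelFlux f r h i ^ 2 := by
    have hconst : EqOn (fun x => f x * pixelAverage f r h x)
        (fun x => f x * (pixelFlux f r h i / h)) (pixel r h i) := fun x hx => by
      simp only [pixelAverage, (pixelIndex_eq_iff hh).2 hx]
    rw [setIntegral_congr_fun (measurableSet_pixel i) hconst, integral_mul_const,
      setIntegral_pixel hh.le]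
    ring
  rw [← setIntegral_univ, ← hcover, integral_iUnion measurableSet_pixel hdisj
    hint.integrableOn, tsum_congr hpixel, tsum_mul_left]

theorem norm_pixelAverage_sub_le (hf : Continuous f) (hh : 0 < h) {ε : ℝ}
    (hε : ∀ t, |t - x| ≤ h → ‖f t - f x‖ ≤ ε) : ‖pixelAverage f r h x - f x‖ ≤ ε := by
  set i := pixelIndex r h x
  set a := ((i : ℝ) + r) * h - h / 2 with ha
  have hx : a < x ∧ x ≤ a + h := by
    have : x ∈ pixel r h i := mem_pixel_pixelIndex hh
    rw [pixel, mem_Ioc] at this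
    exact ⟨this.1, by linarith⟩
  have hnear : ∀ t ∈ uIoc a (a + h), ‖f t - f x‖ ≤ ε := fun t ht => by
    rw [uIoc_of_le (by linarith), mem_Ioc] at ht
    exact hε t (abs_sub_le_iff.2 ⟨by linarith, by linarith⟩)
  have hsub : pixelAverage f r h x - f x = (∫ t in a..a + h, (f t - f x)) / h := by
    rw [intervalIntegral.integral_sub (hf.intervalIntegrable _ _) intervalIntegrable_const,
      intervalIntegral.integral_const, smul_eq_mul, add_sub_cancel_left, pixelAverage, pixelFlux,
      show ((i : ℝ) + r) * h + h / 2 = a + h by ring, sub_div, mul_div_cancel_left₀ _ hh.ne']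
  rw [hsub, norm_div, Real.norm_eq_abs h, abs_of_pos hh, div_le_iff₀ hh]
  simpa [abs_of_pos hh] using intervalIntegral.norm_integral_le_of_norm_le_const hnear

theorem tendsto_pixelAverage (hf : Continuous f) (x : ℝ) :
    Tendsto (fun h => pixelAverage f r h x) (𝓝[>] 0) (𝓝 (f x)) := by
  rw [Metric.tendsto_nhdsWithin_nhds]
  intro ε hε
  obtain ⟨δ, hδ, hfδ⟩ := Metric.continuous_iff.1 hf x (ε / 2) (half_pos hε)
  refine ⟨δ, hδ, fun h hh hhδ => ?_⟩
  rw [dist_eq_norm]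
  refine (norm_pixelAverage_sub_le hf hh fun t ht => (hfδ t ?_).le).trans_lt (half_lt_self hε)
  rw [Real.dist_eq, sub_zero, abs_of_pos hh] at hhδ
  rw [Real.dist_eq]
  exact ht.trans_lt hhδ

theorem tendsto_inv_mul_tsum_sq_pixelFlux (hf : Continuous f) (hfi : Integrable f)
    (hC : ∀ x, ‖f x‖ ≤ C) (r : ℝ) :
    Tendsto (fun h => (1 / h) * ∑' i : ℤ, pixelFlux f r h i ^ 2) (𝓝[>] 0)
      (𝓝 (∫ x, f x ^ 2)) := by
  have hdom : Tendsto (fun h => ∫ x, f x * pixelAverage f r h x) (𝓝[>] 0)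
      (𝓝 (∫ x, f x * f x)) :=
    tendsto_integral_filter_of_dominated_convergence (fun x => C * ‖f x‖)
      (Eventually.of_forall fun _ =>
        (hf.measurable.mul measurable_pixelAverage).aestronglyMeasurable)
      (Eventually.of_forall fun _ => Eventually.of_forall fun x => by
        rw [norm_mul, mul_comm]
        exact mul_le_mul_of_nonneg_right (norm_pixelAverage_le hC) (norm_nonneg _))
      (hfi.norm.const_mul C)
      (Eventually.of_forall fun x => (tendsto_pixelAverage hf x).const_mul (f x))
  simp_rw [← sq] at hdom
  exact hdom.congr' (eventually_mem_nhdsWithin.mono fun h hh => integral_mul_pixelAverage hfi hC hh)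

end Pixels

section Gaussian

variable (c m : ℝ) {s : ℝ}

theorem norm_mul_exp_neg_sq_div_le (x : ℝ) : ‖c * exp (-(x - m) ^ 2 / (2 * s ^ 2))‖ ≤ |c| := by
  rw [norm_mul, Real.norm_eq_abs, Real.norm_of_nonneg (exp_nonneg _)]
  refine mul_le_of_le_one_right (abs_nonneg c) (exp_le_one_iff.2 ?_)
  exact div_nonpos_of_nonpos_of_nonneg (neg_nonpos.2 (sq_nonneg _)) (by positivity)

theorem integrable_mul_exp_neg_sq_div (hs : s ≠ 0) :
    Integrable fun x => c * exp (-(x - m) ^ 2 / (2 * s ^ 2)) := by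
  have hb : 0 < 1 / (2 * s ^ 2) := by positivity
  refine (((integrable_exp_neg_mul_sq hb).comp_sub_right m).const_mul c).congr (Eventually.of_forall fun x => ?_)
  simp only [neg_mul, one_div, neg_div, inv_mul_eq_div]

theorem integral_sq_mul_exp_neg_sq_div (hs : 0 < s) :
    ∫ x, (c * exp (-(x - m) ^ 2 / (2 * s ^ 2))) ^ 2 = c ^ 2 * (√π * s) := by
  have hsq (x : ℝ) : (c * exp (-(x - m) ^ 2 / (2 * s ^ 2))) ^ 2 =
      c ^ 2 * exp (-(1 / s ^ 2) * (x - m) ^ 2) := by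
    rw [mul_pow, ← exp_nat_mul]
    congr 2
    field_simp
    ring
  simp_rw [hsq]
  rw [integral_const_mul, integral_sub_right_eq_self (fun x => exp (-(1 / s ^ 2) * x ^ 2)),
    integral_gaussian, div_div_eq_mul_div, div_one, sqrt_mul pi_nonneg, sqrt_sq hs.le]

end Gaussian

theorem stmt_11_general
    (σ xc r : ℝ) (hσ : 0 < σ)
    (g : ℝ → ℤ → ℝ)
    (hg : ∀ Δx : ℝ, ∀ i : ℤ, g Δx i =
      ∫ x in (((i : ℝ) + r) * Δx - Δx / 2)..(((i : ℝ) + r) * Δx + Δx / 2),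
        (1 / (Real.sqrt (2 * π) * σ)) * Real.exp (-(x - xc) ^ 2 / (2 * σ ^ 2))) :
    Tendsto (fun Δx : ℝ => (1 / Δx) * ∑' i : ℤ, g Δx i ^ 2)
      (𝓝[>] 0) (𝓝 (1 / (2 * Real.sqrt π * σ))) := by
  set c := 1 / (√(2 * π) * σ)
  obtain rfl : g = pixelFlux (fun x => c * exp (-(x - xc) ^ 2 / (2 * σ ^ 2))) r :=
    funext fun Δx => funext (hg Δx)
  have hlim := tendsto_inv_mul_tsum_sq_pixelFlux (by fun_prop)
    (integrable_mul_exp_neg_sq_div c xc hσ.ne') (norm_mul_exp_neg_sq_div_le c xc) r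
  have hvalue : c ^ 2 * (√π * σ) = 1 / (2 * √π * σ) := by
    have hπ : √π ^ 2 = π := sq_sqrt pi_nonneg
    have hc : c ^ 2 = 1 / (2 * π * σ ^ 2) := by
      rw [div_pow, mul_pow, sq_sqrt (by positivity), one_pow]
    rw [hc]
    field_simp
    linear_combination hπ
  rwa [integral_sq_mul_exp_neg_sq_div c xc hσ, hvalue] at hlim

/-- **High-resolution limit of `Σ g_i²`.**  For pixels of size `Δx` centered at
`x_i = (i+r)Δx` with Gaussian flux fractions `g_i(x_c)`,
`(1/Δx) Σ_{i∈ℤ} g_i(x_c)² → 1/(2√π σ)` as `Δx → 0⁺`. -/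
theorem stmt_11
    (σ xc r : ℝ) (hσ : 0 < σ) (hr : r ∈ Set.Ico (0 : ℝ) 1)
    (g : ℝ → ℤ → ℝ)
    (hg : ∀ Δx : ℝ, ∀ i : ℤ, g Δx i =
      ∫ x in (((i : ℝ) + r) * Δx - Δx / 2)..(((i : ℝ) + r) * Δx + Δx / 2),
        (1 / (Real.sqrt (2 * π) * σ)) * Real.exp (-(x - xc) ^ 2 / (2 * σ ^ 2))) :
    Tendsto (fun Δx : ℝ => (1 / Δx) * ∑' i : ℤ, g Δx i ^ 2)
      (𝓝[>] 0) (𝓝 (1 / (2 * Real.sqrt π * σ))) :=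
  stmt_11_general σ xc r hσ g hg
end
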